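/- arXiv:2001.01098 — 4 statements merged into one kernel-verified Lean document; each statement's English description precedes it below -/
import Mathlib

section
/- For every d ≥ 1 and all d×d complex (or real) matrices Σ and M, the function t ↦ e^{Σ + tM} is differentiable at t = 0 and its derivative equals dexp_Σ(M) · e^Σ, where dexp_Σ(M) = ∑_{n≥0} ad_Σ^n(M)/(n+1)!. Equivalently, the Fréchet differential of the exponential map at Σ applied to M is dexp_Σ(M) e^Σ. -/
noncomputable section

attribute [local instance] Matrix.normedAddCommGroup Matrix.normedSpace

/-- `d × d` complex matrices. -/
abbrev Mat (d : ℕ) := Matrix (Fin d) (Fin d) ℂ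

/-- Iterated adjoint operator. -/
def adPow {d : ℕ} (S : Mat d) : ℕ → Mat d → Mat d
  | 0, M => M
  | n + 1, M => S * adPow S n M - adPow S n M * S

/-- `dexp_Σ(M) = ∑_{n≥0} ad_Σ^n(M)/(n+1)!`. -/
def dexp {d : ℕ} (S M : Mat d) : Mat d :=
  ∑' n : ℕ, (((n + 1).factorial : ℂ))⁻¹ • adPow S n M

/-!
Write `L` and `R` for left and right multiplication by `a`: they commute and `ad a = L - R`.
Differentiating the exponential series term by term gives the derivative
`∑ₙ (n+1)!⁻¹ ∑_{i+j=n} aⁱ b aʲ`. The Cauchy product of `∑ₖ (k+1)!⁻¹ adₐᵏ b` with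
`exp a = ∑ₘ aᵐ / m!` has `n`-th term `(n+1)!⁻¹ ∑_{k+m=n} C(n+1,k+1) adₐᵏ(b) aᵐ`, and the identity
`∑_{k+m=n} C(n+1,k+1) xᵏ yᵐ = ∑_{i+j=n} (x+y)ⁱ yʲ` for the commuting pair `x = ad a`, `y = R`
(so that `x + y = L`) turns it into the same sum.
-/

open Finset NormedSpace LieAlgebra
open scoped Nat

attribute [local instance] LieRing.ofAssociativeRing

theorem Commute.sum_antidiagonal_choose_succ_nsmul {R : Type*} [Semiring R] {x y : R}
    (h : Commute x y) (n : ℕ) :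
    ∑ m ∈ antidiagonal n, (n + 1).choose (m.1 + 1) • (x ^ m.1 * y ^ m.2) =
      ∑ m ∈ antidiagonal n, (x + y) ^ m.1 * y ^ m.2 := by
  induction n with
  | zero => simp
  | succ n ih =>
    have pascal : ∑ m ∈ antidiagonal (n + 1), (n + 2).choose (m.1 + 1) • (x ^ m.1 * y ^ m.2) =
        ∑ m ∈ antidiagonal (n + 1), (n + 1).choose m.1 • (x ^ m.1 * y ^ m.2) +
          ∑ m ∈ antidiagonal (n + 1), (n + 1).choose (m.1 + 1) • (x ^ m.1 * y ^ m.2) := by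
      rw [← sum_add_distrib]
      exact sum_congr rfl fun m _ => by rw [Nat.choose_succ_succ, add_smul]
    rw [pascal, ← h.add_pow', Nat.sum_antidiagonal_succ',
      Nat.sum_antidiagonal_succ' (f := fun m => (x + y) ^ m.1 * y ^ m.2)]
    simp only [Nat.choose_succ_self, zero_smul, pow_zero, mul_one, pow_succ, ← mul_assoc,
      ← smul_mul_assoc, ← sum_mul]
    rw [zero_mul, zero_add, ← ih]
    simp only [smul_mul_assoc]

theorem sum_antidiagonal_choose_succ_nsmul_ad_pow_mul {R A : Type*} [CommRing R] [Ring A]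
    [Algebra R A] (a b : A) (n : ℕ) :
    ∑ m ∈ antidiagonal n, (n + 1).choose (m.1 + 1) • ((ad R A a ^ m.1) b * a ^ m.2) =
      ∑ m ∈ antidiagonal n, a ^ m.1 * b * a ^ m.2 := by
  have hcomm : Commute (ad R A a) (LinearMap.mulRight R a) := by
    rw [ad_eq_lmul_left_sub_lmul_right]
    exact (LinearMap.commute_mulLeft_right a a).sub_left (Commute.refl _)
  have hsplit : ad R A a + LinearMap.mulRight R a = LinearMap.mulLeft R a := by
    rw [ad_eq_lmul_left_sub_lmul_right, Pi.sub_apply, sub_add_cancel]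
  have hswap (k m : ℕ) : ad R A a ^ k * LinearMap.mulRight R (a ^ m) =
      LinearMap.mulRight R (a ^ m) * ad R A a ^ k := by
    rw [← LinearMap.pow_mulRight, (hcomm.pow_pow k m).eq]
  have key := congrArg (· b) (hcomm.sum_antidiagonal_choose_succ_nsmul n)
  simp only [hsplit, hswap, LinearMap.sum_apply, LinearMap.smul_apply, Module.End.mul_apply,
    LinearMap.pow_mulLeft, LinearMap.pow_mulRight, LinearMap.mulLeft_apply,
    LinearMap.mulRight_apply] at key
  simpa only [mul_assoc] using key

theorem sum_antidiagonal_inv_factorial_ad_pow_mul {𝕂 A : Type*} [Field 𝕂] [CharZero 𝕂] [Ring A]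
    [Algebra 𝕂 A] (a b : A) (n : ℕ) :
    ∑ m ∈ antidiagonal n, (((m.1 + 1)! : 𝕂)⁻¹ • (ad 𝕂 A a ^ m.1) b) * ((m.2 ! : 𝕂)⁻¹ • a ^ m.2) =
      ((n + 1)! : 𝕂)⁻¹ • ∑ m ∈ antidiagonal n, a ^ m.1 * b * a ^ m.2 := by
  rw [← sum_antidiagonal_choose_succ_nsmul_ad_pow_mul (R := 𝕂), smul_sum]
  refine sum_congr rfl fun m hm => ?_
  replace hm : m.2 + (m.1 + 1) = n + 1 := by rw [HasAntidiagonal.mem_antidiagonal] at hm; omega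
  have hchoose : ((n + 1).choose (m.1 + 1) : 𝕂) ≠ 0 := by
    exact_mod_cast (Nat.choose_pos (by omega)).ne'
  have hfact : ((n + 1).choose (m.1 + 1) * m.2 ! * (m.1 + 1)! : 𝕂) = (n + 1)! := by
    exact_mod_cast hm ▸ Nat.add_choose_mul_factorial_mul_factorial m.2 (m.1 + 1)
  rw [smul_mul_smul_comm, ← Nat.cast_smul_eq_nsmul 𝕂, smul_smul, ← hfact]
  congr 1
  field_simp

section NormEstimates

variable {R 𝔸 : Type*} [SeminormedRing 𝔸]

theorem norm_pow_mul_le (a b : 𝔸) (n : ℕ) : ‖a ^ n * b‖ ≤ ‖a‖ ^ n * ‖b‖ := by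
  induction n with
  | zero => simp
  | succ n ih =>
    calc ‖a ^ (n + 1) * b‖ = ‖a * (a ^ n * b)‖ := by rw [pow_succ', mul_assoc]
      _ ≤ ‖a‖ * (‖a‖ ^ n * ‖b‖) := (norm_mul_le _ _).trans (by gcongr)
      _ = ‖a‖ ^ (n + 1) * ‖b‖ := by ring

theorem norm_mul_pow_le (a b : 𝔸) (n : ℕ) : ‖b * a ^ n‖ ≤ ‖b‖ * ‖a‖ ^ n := by
  induction n with
  | zero => simp
  | succ n ih =>
    calc ‖b * a ^ (n + 1)‖ = ‖b * a ^ n * a‖ := by rw [pow_succ, mul_assoc]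
      _ ≤ ‖b‖ * ‖a‖ ^ n * ‖a‖ := (norm_mul_le _ _).trans (by gcongr)
      _ = ‖b‖ * ‖a‖ ^ (n + 1) := by ring

theorem norm_pow_mul_mul_pow_le (a b : 𝔸) (i j : ℕ) :
    ‖a ^ i * b * a ^ j‖ ≤ ‖a‖ ^ (i + j) * ‖b‖ :=
  calc ‖a ^ i * b * a ^ j‖ ≤ ‖a ^ i * b‖ * ‖a‖ ^ j := norm_mul_pow_le _ _ _
    _ ≤ ‖a‖ ^ i * ‖b‖ * ‖a‖ ^ j := by gcongr; exact norm_pow_mul_le _ _ _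
    _ = ‖a‖ ^ (i + j) * ‖b‖ := by ring

theorem norm_sum_range_pow_mul_mul_pow_le (a b : 𝔸) (n : ℕ) :
    ‖∑ i ∈ range n, a ^ (n.pred - i) * b * a ^ i‖ ≤ n * (‖a‖ ^ n.pred * ‖b‖) :=
  calc ‖∑ i ∈ range n, a ^ (n.pred - i) * b * a ^ i‖
      ≤ ∑ i ∈ range n, ‖a‖ ^ n.pred * ‖b‖ := by
        refine (norm_sum_le _ _).trans (sum_le_sum fun i hi => ?_)
        have hi : i ≤ n.pred := Nat.le_pred_of_lt (mem_range.mp hi)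
        simpa only [Nat.sub_add_cancel hi] using norm_pow_mul_mul_pow_le a b (n.pred - i) i
    _ = n * (‖a‖ ^ n.pred * ‖b‖) := by rw [sum_const, card_range, nsmul_eq_mul]

theorem norm_ad_pow_apply_le [CommRing R] [Algebra R 𝔸] (a b : 𝔸) (k : ℕ) :
    ‖(ad R 𝔸 a ^ k) b‖ ≤ (2 * ‖a‖) ^ k * ‖b‖ := by
  induction k with
  | zero => simp
  | succ k ih =>
    set c := (ad R 𝔸 a ^ k) b
    calc ‖(ad R 𝔸 a ^ (k + 1)) b‖ = ‖a * c - c * a‖ := by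
          rw [pow_succ', Module.End.mul_apply, ad_apply, Ring.lie_def]
      _ ≤ ‖a‖ * ‖c‖ + ‖c‖ * ‖a‖ :=
          (norm_sub_le _ _).trans (add_le_add (norm_mul_le _ _) (norm_mul_le _ _))
      _ = 2 * ‖a‖ * ‖c‖ := by ring
      _ ≤ 2 * ‖a‖ * ((2 * ‖a‖) ^ k * ‖b‖) := by gcongr
      _ = (2 * ‖a‖) ^ (k + 1) * ‖b‖ := by ring

end NormEstimates

section BanachAlgebra

variable {𝕂 𝔸 : Type*} [RCLike 𝕂] [NormedRing 𝔸] [NormedAlgebra 𝕂 𝔸]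

theorem summable_norm_inv_factorial_succ_smul_ad_pow (a b : 𝔸) :
    Summable fun k => ‖((k + 1)! : 𝕂)⁻¹ • (ad 𝕂 𝔸 a ^ k) b‖ := by
  refine .of_nonneg_of_le (fun _ => norm_nonneg _) (fun k => ?_)
    ((Real.summable_pow_div_factorial (2 * ‖a‖)).mul_right ‖b‖)
  calc ‖((k + 1)! : 𝕂)⁻¹ • (ad 𝕂 𝔸 a ^ k) b‖ ≤ ((k + 1)! : ℝ)⁻¹ * ((2 * ‖a‖) ^ k * ‖b‖) := by
        rw [norm_smul, norm_inv, RCLike.norm_natCast]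
        gcongr
        exact norm_ad_pow_apply_le a b k
    _ ≤ (k ! : ℝ)⁻¹ * ((2 * ‖a‖) ^ k * ‖b‖) := by
        gcongr
        exact k.le_succ
    _ = (2 * ‖a‖) ^ k / k ! * ‖b‖ := by ring

theorem tsum_inv_factorial_smul_sum_range_eq (a b : 𝔸) :
    ∑' n, (n ! : 𝕂)⁻¹ • ∑ i ∈ range n, a ^ (n.pred - i) * b * a ^ i =
      ∑' n, ((n + 1)! : 𝕂)⁻¹ • ∑ m ∈ antidiagonal n, a ^ m.1 * b * a ^ m.2 := by
  refine ((tsum_pnat_eq_tsum_of_eq_zero (by simp)).symm.trans tsum_pnat_eq_tsum_succ).trans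
    (tsum_congr fun n => ?_)
  rw [← Nat.sum_antidiagonal_swap, Nat.pred_succ]
  simp only [Prod.fst_swap, Prod.snd_swap]
  rw [Nat.sum_antidiagonal_eq_sum_range_succ (fun i j => a ^ j * b * a ^ i)]

variable [CompleteSpace 𝔸]

theorem tsum_inv_factorial_succ_smul_ad_pow_mul_exp (a b : 𝔸) :
    (∑' k, ((k + 1)! : 𝕂)⁻¹ • (ad 𝕂 𝔸 a ^ k) b) * exp a =
      ∑' n, ((n + 1)! : 𝕂)⁻¹ • ∑ m ∈ antidiagonal n, a ^ m.1 * b * a ^ m.2 := by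
  rw [congrFun (exp_eq_tsum 𝕂) a, tsum_mul_tsum_eq_tsum_sum_antidiagonal_of_summable_norm
    (summable_norm_inv_factorial_succ_smul_ad_pow a b) (norm_expSeries_summable' a)]
  simp only [sum_antidiagonal_inv_factorial_ad_pow_mul]

theorem hasDerivAt_exp_add_smul_termwise (a b : 𝔸) :
    HasDerivAt (fun t : 𝕂 => exp (a + t • b))
      (∑' n, (n ! : 𝕂)⁻¹ • ∑ i ∈ range n, a ^ (n.pred - i) * b * a ^ i) 0 := by
  set R := ‖a‖ + ‖b‖
  have hterm (n : ℕ) (t : 𝕂) : HasDerivAt (fun t : 𝕂 => (n ! : 𝕂)⁻¹ • (a + t • b) ^ n)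
      ((n ! : 𝕂)⁻¹ • ∑ i ∈ range n, (a + t • b) ^ (n.pred - i) * b * (a + t • b) ^ i) t := by
    have hline : HasDerivAt (fun t : 𝕂 => a + t • b) b t := by
      simpa using ((hasDerivAt_id t).smul_const b).const_add a
    exact (hline.fun_pow' n).const_smul (n ! : 𝕂)⁻¹
  have hbound (n : ℕ) (t : 𝕂) (ht : t ∈ Metric.ball 0 1) :
      ‖(n ! : 𝕂)⁻¹ • ∑ i ∈ range n, (a + t • b) ^ (n.pred - i) * b * (a + t • b) ^ i‖ ≤
        (n ! : ℝ)⁻¹ * (n * (R ^ n.pred * ‖b‖)) := by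
    have ht : ‖t‖ ≤ 1 := (mem_ball_zero_iff.mp ht).le
    have hR : ‖a + t • b‖ ≤ R :=
      calc ‖a + t • b‖ ≤ ‖a‖ + ‖t‖ * ‖b‖ := (norm_add_le _ _).trans_eq (by rw [norm_smul])
        _ ≤ ‖a‖ + ‖b‖ := by gcongr; exact mul_le_of_le_one_left (norm_nonneg _) ht
    rw [norm_smul, norm_inv, RCLike.norm_natCast]
    gcongr
    exact (norm_sum_range_pow_mul_mul_pow_le (a + t • b) b n).trans (by gcongr)
  have hsummable : Summable fun n : ℕ => (n ! : ℝ)⁻¹ * (n * (R ^ n.pred * ‖b‖)) := by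
    rw [← summable_nat_add_iff 1]
    refine ((Real.summable_pow_div_factorial R).mul_right ‖b‖).congr fun n => ?_
    rw [Nat.factorial_succ, Nat.pred_succ]
    push_cast
    field_simp
  have := hasDerivAt_tsum_of_isPreconnected hsummable Metric.isOpen_ball
    (convex_ball 0 1).isPreconnected (fun n t _ => hterm n t) hbound (Metric.mem_ball_self one_pos)
    (expSeries_summable' (𝕂 := 𝕂) (a + (0 : 𝕂) • b)) (Metric.mem_ball_self one_pos)
  simpa only [exp_eq_tsum 𝕂, zero_smul, add_zero] using this

theorem hasDerivAt_exp_add_smul (a b : 𝔸) :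
    HasDerivAt (fun t : 𝕂 => exp (a + t • b))
      ((∑' k, ((k + 1)! : 𝕂)⁻¹ • (ad 𝕂 𝔸 a ^ k) b) * exp a) 0 := by
  rw [tsum_inv_factorial_succ_smul_ad_pow_mul_exp, ← tsum_inv_factorial_smul_sum_range_eq]
  exact hasDerivAt_exp_add_smul_termwise a b

end BanachAlgebra

theorem adPow_eq_ad_pow {d : ℕ} (S M : Mat d) (n : ℕ) : adPow S n M = (ad ℝ (Mat d) S ^ n) M := by
  induction n with
  | zero => rfl
  | succ n ih => rw [adPow, ih, pow_succ', Module.End.mul_apply, ad_apply, Ring.lie_def]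

theorem dexp_eq_tsum_ad_pow {d : ℕ} (S M : Mat d) :
    dexp S M = ∑' k, ((k + 1)! : ℝ)⁻¹ • (ad ℝ (Mat d) S ^ k) M := by
  simp only [dexp, adPow_eq_ad_pow, RCLike.real_smul_eq_coe_smul (K := ℂ), RCLike.ofReal_inv,
    RCLike.ofReal_natCast]

theorem stmt2_general (d : ℕ) (S M : Mat d) :
    HasDerivAt (fun t : ℝ => NormedSpace.exp (S + t • M))
      (dexp S M * NormedSpace.exp S) 0 := by
  -- The entrywise sup norm is not submultiplicative; the `L∞` operator norm is, and it induces
  -- the same topology, which is all that `HasDerivAt`, `exp` and `tsum` depend on.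
  let _ : NormedRing (Mat d) := Matrix.linftyOpNormedRing
  let _ : NormedAlgebra ℝ (Mat d) := Matrix.linftyOpNormedAlgebra
  rw [dexp_eq_tsum_ad_pow]
  exact @hasDerivAt_exp_add_smul _ _ _ _ _ (FiniteDimensional.complete ℝ _) S M

/-- The function `t ↦ e^{Σ + tM}` is differentiable at `t = 0` with
derivative `dexp_Σ(M) · e^Σ`. -/
theorem stmt2 (d : ℕ) (hd : 1 ≤ d) (S M : Mat d) :
    HasDerivAt (fun t : ℝ => NormedSpace.exp (S + t • M))
      (dexp S M * NormedSpace.exp S) 0 :=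
  stmt2_general d S M
end
end

section
/- For every d ≥ 1 and all d×d complex matrices Σ, M, N, the following integral identity holds: ∫_0^1 τ · dexp_{τΣ}(N) · (e^{τΣ} M e^{−τΣ}) dτ = ∑_{n≥0} ∑_{m≥0} ad_Σ^n(N) · ad_Σ^m(M) / ((n+m+2)(n+1)! m!), the double series being absolutely convergent. -/
noncomputable section

attribute [local instance] Matrix.normedAddCommGroup Matrix.normedSpace

/-!
Expanding `dexp_{τΣ}(N) = ∑ τⁿ ad_Σⁿ(N) / (n+1)!` and
`e^{τΣ} M e^{-τΣ} = e^{τ ad_Σ}(M) = ∑ τᵐ ad_Σᵐ(M) / m!`, the integrand becomes the double series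
`∑ τ^{n+m+1} ad_Σⁿ(N) ad_Σᵐ(M) / ((n+1)! m!)`. Its coefficients are norm-summable, since
`‖ad_Σⁿ(X)‖ ≤ (2d‖Σ‖)ⁿ ‖X‖`, so it can be integrated termwise over `[0, 1]`, and
`∫₀¹ τ^{n+m+1} dτ = 1 / (n+m+2)`. The identity `e^{ad_Σ}(M) = e^Σ M e^{-Σ}` comes from splitting
`ad_Σ` into the commuting operators of left multiplication by `Σ` and right multiplication by `-Σ`.
-/

open NormedSpace Set

section BanachAlgebra

variable {𝕂 A : Type*} [RCLike 𝕂] [NormedRing A] [NormedAlgebra 𝕂 A]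

namespace ContinuousLinearMap

variable (𝕂)

theorem mul_pow_apply (x y : A) (n : ℕ) : (mul 𝕂 A x ^ n) y = x ^ n * y := by
  induction n with
  | zero => simp
  | succ n ih => rw [pow_succ', mul_apply_eq_comp, ih, pow_succ', mul_assoc]; rfl

theorem flip_mul_pow_apply (x y : A) (n : ℕ) : ((mul 𝕂 A).flip x ^ n) y = y * x ^ n := by
  induction n with
  | zero => simp
  | succ n ih => rw [pow_succ', mul_apply_eq_comp, ih, pow_succ, ← mul_assoc]; rfl

end ContinuousLinearMap

variable [CompleteSpace A]

namespace ContinuousLinearMap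

theorem hasSum_exp_apply (T : A →L[𝕂] A) (y : A) :
    HasSum (fun n => (n.factorial : 𝕂)⁻¹ • (T ^ n) y) (exp T y) :=
  (exp_series_hasSum_exp' (𝕂 := 𝕂) T).mapL (apply 𝕂 A y)

theorem exp_add_of_commute {S T : A →L[𝕂] A} (h : Commute S T) : exp (S + T) = exp S * exp T :=
  exp_add_of_commute_of_mem_ball (𝕂 := 𝕂) h
    ((expSeries_radius_eq_top 𝕂 (A →L[𝕂] A)).symm ▸ edist_lt_top _ _)
    ((expSeries_radius_eq_top 𝕂 (A →L[𝕂] A)).symm ▸ edist_lt_top _ _)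

theorem exp_mul_apply (x y : A) : exp (mul 𝕂 A x) y = exp x * y := by
  refine (hasSum_exp_apply _ y).unique ?_
  simpa only [mul_pow_apply, smul_mul_assoc] using (exp_series_hasSum_exp' (𝕂 := 𝕂) x).mul_right y

theorem exp_flip_mul_apply (x y : A) : exp ((mul 𝕂 A).flip x) y = y * exp x := by
  refine (hasSum_exp_apply _ y).unique ?_
  simpa only [flip_mul_pow_apply, mul_smul_comm] using
    (exp_series_hasSum_exp' (𝕂 := 𝕂) x).mul_left y

end ContinuousLinearMap

theorem hasSum_pow_mulLeft_sub_mulRight_apply (x y : A) :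
    HasSum (fun n => (n.factorial : 𝕂)⁻¹ • ((LinearMap.mulLeft 𝕂 x - LinearMap.mulRight 𝕂 x) ^ n) y)
      (exp x * y * exp (-x)) := by
  set L := ContinuousLinearMap.mul 𝕂 A x
  set R := (ContinuousLinearMap.mul 𝕂 A).flip (-x)
  have hLR : Commute L R := ContinuousLinearMap.ext fun z => (mul_assoc x z (-x)).symm
  have hLR_eq : ((L + R : A →L[𝕂] A) : A →ₗ[𝕂] A) =
      LinearMap.mulLeft 𝕂 x - LinearMap.mulRight 𝕂 x := by
    ext z; simp [L, R, sub_eq_add_neg]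
  have h := (L + R).hasSum_exp_apply y
  rw [ContinuousLinearMap.exp_add_of_commute hLR, mul_apply_eq_comp,
    ContinuousLinearMap.exp_flip_mul_apply, ContinuousLinearMap.exp_mul_apply, ← mul_assoc] at h
  simpa only [← hLR_eq, ← ContinuousLinearMap.toLinearMap_pow, ContinuousLinearMap.coe_coe]
    using h

end BanachAlgebra

section TermwiseIntegration

variable {E F G : Type*} [NormedAddCommGroup E] [NormedSpace ℝ E] [NormedAddCommGroup F]
  [NormedSpace ℝ F] [NormedAddCommGroup G] [NormedSpace ℝ G]

theorem ContinuousLinearMap.summable_norm_apply₂ {ι κ : Type*} (B : E →L[ℝ] F →L[ℝ] G)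
    {a : ι → E} {b : κ → F} (ha : Summable fun i => ‖a i‖) (hb : Summable fun j => ‖b j‖) :
    Summable fun p : ι × κ => ‖B (a p.1) (b p.2)‖ :=
  .of_nonneg_of_le (fun _ => norm_nonneg _) (fun _ => B.le_opNorm₂ _ _)
    (((ha.mul_of_nonneg hb (fun _ => norm_nonneg _) fun _ => norm_nonneg _).mul_left ‖B‖).congr
      fun _ => (mul_assoc _ _ _).symm)

theorem summable_norm_pow_smul {c : ℕ → E} (hc : Summable fun n => ‖c n‖) {t : ℝ} (ht : ‖t‖ ≤ 1) :
    Summable fun n => ‖t ^ n • c n‖ :=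
  .of_nonneg_of_le (fun _ => norm_nonneg _)
    (fun n => by
      rw [norm_smul, norm_pow]
      exact mul_le_of_le_one_left (norm_nonneg _) (pow_le_one₀ (norm_nonneg _) ht))
    hc

variable [CompleteSpace G]

theorem hasSum_intervalIntegral_pow_smul {ι : Type*} [Countable ι] {c : ι → G} {f : ℝ → G}
    (k : ι → ℕ) (hc : Summable fun i => ‖c i‖)
    (hf : ∀ t ∈ Ioc (0 : ℝ) 1, HasSum (fun i => t ^ k i • c i) (f t)) :
    HasSum (fun i => ((k i : ℝ) + 1)⁻¹ • c i) (∫ t in (0 : ℝ)..1, f t) := by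
  have hIoc : uIoc (0 : ℝ) 1 = Ioc 0 1 := uIoc_of_le zero_le_one
  have h := intervalIntegral.hasSum_integral_of_dominated_convergence (μ := MeasureTheory.volume)
    (F := fun i t => t ^ k i • c i) (fun i _ => ‖c i‖)
    (fun i => ((continuous_pow (k i)).smul continuous_const).aestronglyMeasurable)
    (fun i => .of_forall fun t ht => by
      rw [hIoc] at ht
      rw [norm_smul, norm_pow, Real.norm_of_nonneg ht.1.le]
      exact mul_le_of_le_one_left (norm_nonneg _) (pow_le_one₀ ht.1.le ht.2))
    (.of_forall fun _ _ => hc) intervalIntegrable_const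
    (.of_forall fun t ht => hf t (hIoc ▸ ht))
  refine h.congr_fun fun i => ?_
  simp [intervalIntegral.integral_smul_const, integral_pow]

theorem ContinuousLinearMap.hasSum_apply₂ {ι κ : Type*} (B : E →L[ℝ] F →L[ℝ] G)
    {a : ι → E} {b : κ → F} {x : E} {y : F} (ha : HasSum a x) (hb : HasSum b y)
    (hab : Summable fun p : ι × κ => ‖B (a p.1) (b p.2)‖) :
    HasSum (fun p : ι × κ => B (a p.1) (b p.2)) (B x y) := by
  have hsum := hab.of_norm.hasSum
  have hrows : HasSum (fun i => B (a i) y) (∑' p : ι × κ, B (a p.1) (b p.2)) :=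
    hsum.prod_fiberwise fun i => hb.mapL (B (a i))
  rwa [hrows.unique (ha.mapL (B.flip y))] at hsum

theorem ContinuousLinearMap.hasSum_intervalIntegral_smul_apply₂ (B : E →L[ℝ] F →L[ℝ] G)
    {a : ℕ → E} {b : ℕ → F} {f : ℝ → E} {g : ℝ → F}
    (ha : Summable fun n => ‖a n‖) (hb : Summable fun m => ‖b m‖)
    (hf : ∀ t ∈ Ioc (0 : ℝ) 1, HasSum (fun n => t ^ n • a n) (f t))
    (hg : ∀ t ∈ Ioc (0 : ℝ) 1, HasSum (fun m => t ^ m • b m) (g t)) :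
    (Summable fun p : ℕ × ℕ => ‖((p.1 + p.2 + 2 : ℝ))⁻¹ • B (a p.1) (b p.2)‖) ∧
    HasSum (fun p : ℕ × ℕ => ((p.1 + p.2 + 2 : ℝ))⁻¹ • B (a p.1) (b p.2))
      (∫ t in (0 : ℝ)..1, t • B (f t) (g t)) := by
  have hB := B.summable_norm_apply₂ ha hb
  refine ⟨hB.of_nonneg_of_le (fun _ => norm_nonneg _) fun p => ?_, ?_⟩
  · rw [norm_smul, Real.norm_of_nonneg (by positivity)]
    exact mul_le_of_le_one_left (norm_nonneg _) (inv_le_one_of_one_le₀ (by linarith))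
  have hpoint : ∀ t ∈ Ioc (0 : ℝ) 1, HasSum (fun p : ℕ × ℕ => t ^ (p.1 + p.2 + 1) •
      B (a p.1) (b p.2)) (t • B (f t) (g t)) := by
    intro t ht
    have ht1 : ‖t‖ ≤ 1 := by rw [Real.norm_of_nonneg ht.1.le]; exact ht.2
    have hab :=
      B.summable_norm_apply₂ (summable_norm_pow_smul ha ht1) (summable_norm_pow_smul hb ht1)
    have h := (B.hasSum_apply₂ (hf t ht) (hg t ht) hab).const_smul t
    refine h.congr_fun fun p => ?_
    simp only [map_smul, smul_apply, smul_smul]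
    congr 1
    ring
  refine (hasSum_intervalIntegral_pow_smul _ hB hpoint).congr_fun fun p => ?_
  congr 1
  push_cast
  ring

end TermwiseIntegration

-- `‖·‖` is the entrywise sup norm `Matrix.normedAddCommGroup`.
theorem Matrix.norm_mul_le_card_mul_norm_mul_norm {l m n α : Type*} [Fintype l] [Fintype m]
    [Fintype n] [NormedRing α] (A : Matrix l m α) (B : Matrix m n α) :
    ‖A * B‖ ≤ Fintype.card m * ‖A‖ * ‖B‖ := by
  refine (Matrix.norm_le_iff (by positivity)).2 fun i j => ?_
  calc ‖(A * B) i j‖ ≤ ∑ k, ‖A i k * B k j‖ := norm_sum_le _ _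
    _ ≤ ∑ _k : m, ‖A‖ * ‖B‖ := Finset.sum_le_sum fun k _ => (norm_mul_le _ _).trans <|
        mul_le_mul (Matrix.norm_entry_le_entrywise_sup_norm A)
          (Matrix.norm_entry_le_entrywise_sup_norm B) (norm_nonneg _) (norm_nonneg _)
    _ = Fintype.card m * ‖A‖ * ‖B‖ := by simp [mul_assoc]

section Mat

variable {d : ℕ}

theorem adPow_eq_pow_mulLeft_sub_mulRight (S M : Mat d) (n : ℕ) :
    adPow S n M = ((LinearMap.mulLeft ℂ S - LinearMap.mulRight ℂ S) ^ n) M := by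
  induction n with
  | zero => rfl
  | succ n ih => rw [pow_succ', Module.End.mul_apply, ← ih]; rfl

theorem hasSum_inv_factorial_smul_adPow (S M : Mat d) :
    HasSum (fun n => (n.factorial : ℂ)⁻¹ • adPow S n M) (exp S * M * exp (-S)) := by
  simp only [adPow_eq_pow_mulLeft_sub_mulRight]
  -- The operator norm makes `Mat d` a Banach algebra, with the same topology as the sup norm.
  open scoped Matrix.Norms.Operator in exact hasSum_pow_mulLeft_sub_mulRight_apply S M

theorem adPow_smul (S M : Mat d) (t : ℝ) (n : ℕ) : adPow (t • S) n M = t ^ n • adPow S n M := by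
  induction n with
  | zero => simp [adPow]
  | succ n ih =>
    simp only [adPow, ih, smul_mul_assoc, mul_smul_comm]
    module

theorem norm_adPow_le (S M : Mat d) (n : ℕ) : ‖adPow S n M‖ ≤ (2 * d * ‖S‖) ^ n * ‖M‖ := by
  induction n with
  | zero => simp [adPow]
  | succ n ih =>
    have hSX := Matrix.norm_mul_le_card_mul_norm_mul_norm S (adPow S n M)
    have hXS := Matrix.norm_mul_le_card_mul_norm_mul_norm (adPow S n M) S
    rw [Fintype.card_fin] at hSX hXS
    calc ‖adPow S (n + 1) M‖ ≤ ‖S * adPow S n M‖ + ‖adPow S n M * S‖ := norm_sub_le _ _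
      _ ≤ 2 * d * ‖S‖ * ‖adPow S n M‖ := by linarith
      _ ≤ 2 * d * ‖S‖ * ((2 * d * ‖S‖) ^ n * ‖M‖) := by gcongr
      _ = (2 * d * ‖S‖) ^ (n + 1) * ‖M‖ := by ring

theorem summable_norm_smul_adPow (S M : Mat d) {c : ℕ → ℂ}
    (hc : ∀ n, ‖c n‖ ≤ (n.factorial : ℝ)⁻¹) : Summable fun n => ‖c n • adPow S n M‖ := by
  refine .of_nonneg_of_le (fun _ => norm_nonneg _) (fun n => ?_)
    ((Real.summable_pow_div_factorial (2 * d * ‖S‖)).mul_right ‖M‖)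
  rw [norm_smul, div_eq_inv_mul, mul_assoc]
  exact mul_le_mul (hc n) (norm_adPow_le S M n) (norm_nonneg _) (by positivity)

theorem norm_inv_factorial_succ_le (n : ℕ) :
    ‖((n + 1).factorial : ℂ)⁻¹‖ ≤ (n.factorial : ℝ)⁻¹ := by
  rw [norm_inv, Complex.norm_natCast]
  exact inv_anti₀ (by positivity) (Nat.cast_le.mpr (Nat.factorial_le n.le_succ))

theorem hasSum_dexp_smul (S N : Mat d) (t : ℝ) :
    HasSum (fun n => t ^ n • (((n + 1).factorial : ℂ)⁻¹ • adPow S n N)) (dexp (t • S) N) := by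
  have h : HasSum (fun n => ((n + 1).factorial : ℂ)⁻¹ • adPow (t • S) n N) (dexp (t • S) N) :=
    (summable_norm_smul_adPow (t • S) N norm_inv_factorial_succ_le).of_norm.hasSum
  exact h.congr_fun fun n => by rw [adPow_smul, smul_comm]

theorem hasSum_exp_conj_smul (S M : Mat d) (t : ℝ) :
    HasSum (fun m => t ^ m • ((m.factorial : ℂ)⁻¹ • adPow S m M))
      (exp (t • S) * M * exp (-(t • S))) :=
  (hasSum_inv_factorial_smul_adPow (t • S) M).congr_fun fun m => by rw [adPow_smul, smul_comm]

variable (d) in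
def matMulCLM : Mat d →L[ℝ] Mat d →L[ℝ] Mat d :=
  (LinearMap.mul ℝ (Mat d)).mkContinuous₂ d fun X Y => by
    simpa using Matrix.norm_mul_le_card_mul_norm_mul_norm X Y

theorem inv_mul_factorial_smul_mul (n m : ℕ) (X Y : Mat d) :
    (((n + m + 2 : ℕ) * (n + 1).factorial * m.factorial : ℂ))⁻¹ • (X * Y) =
      ((n + m + 2 : ℝ))⁻¹ • ((((n + 1).factorial : ℂ)⁻¹ • X) * ((m.factorial : ℂ)⁻¹ • Y)) := by
  rw [smul_mul_smul_comm, ← Complex.coe_smul, smul_smul]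
  congr 1
  simp only [mul_inv]
  push_cast
  ring

end Mat

theorem stmt6_general (d : ℕ) (S M N : Mat d) :
    Summable (fun p : ℕ × ℕ =>
      ‖(((p.1 + p.2 + 2 : ℕ) * (p.1 + 1).factorial * p.2.factorial : ℂ))⁻¹ •
        (adPow S p.1 N * adPow S p.2 M)‖) ∧
    HasSum (fun p : ℕ × ℕ =>
      (((p.1 + p.2 + 2 : ℕ) * (p.1 + 1).factorial * p.2.factorial : ℂ))⁻¹ •
        (adPow S p.1 N * adPow S p.2 M))
      (∫ τ in (0:ℝ)..1,
        τ • (dexp (τ • S) N *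
          (NormedSpace.exp (τ • S) * M * NormedSpace.exp (-(τ • S))))) := by
  have key := (matMulCLM d).hasSum_intervalIntegral_smul_apply₂
    (summable_norm_smul_adPow S N norm_inv_factorial_succ_le)
    (summable_norm_smul_adPow S M fun n => by simp)
    (fun t _ => hasSum_dexp_smul S N t) (fun t _ => hasSum_exp_conj_smul S M t)
  simp only [matMulCLM, LinearMap.mkContinuous₂_apply, LinearMap.mul_apply'] at key
  simp only [inv_mul_factorial_smul_mul]
  exact key

/-- `∫_0^1 τ · dexp_{τΣ}(N) · (e^{τΣ} M e^{−τΣ}) dτ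
= ∑_{n,m≥0} ad_Σ^n(N) · ad_Σ^m(M) / ((n+m+2)(n+1)! m!)`, the double series being
absolutely convergent. -/
theorem stmt6 (d : ℕ) (hd : 1 ≤ d) (S M N : Mat d) :
    Summable (fun p : ℕ × ℕ =>
      ‖(((p.1 + p.2 + 2 : ℕ) * (p.1 + 1).factorial * p.2.factorial : ℂ))⁻¹ •
        (adPow S p.1 N * adPow S p.2 M)‖) ∧
    HasSum (fun p : ℕ × ℕ =>
      (((p.1 + p.2 + 2 : ℕ) * (p.1 + 1).factorial * p.2.factorial : ℂ))⁻¹ •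
        (adPow S p.1 N * adPow S p.2 M))
      (∫ τ in (0:ℝ)..1,
        τ • (dexp (τ • S) N *
          (NormedSpace.exp (τ • S) * M * NormedSpace.exp (-(τ • S))))) :=
  stmt6_general d S M N
end
end

section
/- (Baker, invertibility criterion) For every d ≥ 1 and every d×d complex matrix Σ, the linear operator dexp_Σ : M^{d×d} → M^{d×d}, dexp_Σ(M) = ∑_{n≥0} ad_Σ^n(M)/(n+1)!, is invertible if and only if no eigenvalue of the linear operator ad_Σ : M^{d×d} → M^{d×d} belongs to the set {2πim : m ∈ ℤ, m ≠ 0}. -/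
noncomputable section

/-- The adjoint operator `ad_Σ : M ↦ ΣM − MΣ` as a linear endomorphism of `M^{d×d}`. -/
def adLin {d : ℕ} (S : Mat d) : Module.End ℂ (Mat d) where
  toFun M := S * M - M * S
  map_add' x y := by noncomm_ring
  map_smul' c x := by
    simp only [RingHom.id_apply, Matrix.mul_smul, Matrix.smul_mul, smul_sub]

/-!
`dexp_Σ = φ(ad_Σ)` for the entire function `φ(z) = (e^z - 1)/z = ∑ zⁿ/(n+1)!` (`expSubOneDiv`),
whose zeros are exactly the points `2πim`, `m ≠ 0`, since `z φ(z) = e^z - 1`. On an eigenvector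
of `ad_Σ` with eigenvalue `μ`, `dexp_Σ` acts as multiplication by `φ(μ)`. Conversely, `dexp_Σ`
commutes with `ad_Σ`, so its kernel is `ad_Σ`-invariant and, if nonzero, contains an eigenvector
of `ad_Σ`, whose eigenvalue is then a zero of `φ`. In finite dimension, injectivity is bijectivity.
-/

open scoped Nat
open Module

section BanachAlgebra

variable {𝔸 : Type*} [NormedRing 𝔸] [NormedAlgebra ℂ 𝔸]

def expSubOneDiv (a : 𝔸) : 𝔸 :=
  ∑' n : ℕ, ((n + 1)! : ℂ)⁻¹ • a ^ n

lemma summable_expSubOneDiv [CompleteSpace 𝔸] (a : 𝔸) :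
    Summable fun n : ℕ => ((n + 1)! : ℂ)⁻¹ • a ^ n := by
  refine (NormedSpace.norm_expSeries_summable' (𝕂 := ℂ) a).of_norm_bounded fun n => ?_
  rw [norm_smul, norm_smul]
  gcongr
  simp only [norm_inv, Complex.norm_natCast]
  gcongr
  omega

lemma commute_expSubOneDiv (a : 𝔸) : Commute a (expSubOneDiv a) :=
  Commute.tsum_right a fun n => ((Commute.refl a).pow_right n).smul_right _

end BanachAlgebra

lemma expSubOneDiv_zero : expSubOneDiv (0 : ℂ) = 1 := by
  rw [expSubOneDiv, tsum_eq_single 0 fun n hn => by simp [zero_pow hn]]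
  simp

lemma mul_expSubOneDiv (z : ℂ) : z * expSubOneDiv z = Complex.exp z - 1 := by
  rw [Complex.exp_eq_exp_ℂ, NormedSpace.exp_eq_tsum_div]
  beta_reduce
  rw [(NormedSpace.expSeries_div_summable z).tsum_eq_zero_add, expSubOneDiv,
    ← (summable_expSubOneDiv z).tsum_mul_left]
  simp only [Nat.factorial_zero, Nat.cast_one, div_one, pow_zero, add_sub_cancel_left,
    smul_eq_mul, pow_succ]
  exact tsum_congr fun n => by ring

lemma expSubOneDiv_eq_zero_iff (z : ℂ) :
    expSubOneDiv z = 0 ↔ ∃ m : ℤ, m ≠ 0 ∧ z = 2 * Real.pi * Complex.I * m := by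
  constructor
  · intro h
    have hz : z ≠ 0 := by rintro rfl; simp [expSubOneDiv_zero] at h
    have hexp : Complex.exp z = 1 := by
      linear_combination -(mul_expSubOneDiv z) + z * h
    obtain ⟨m, rfl⟩ := Complex.exp_eq_one_iff.1 hexp
    exact ⟨m, by rintro rfl; simp at hz, by ring⟩
  · rintro ⟨m, hm, rfl⟩
    have hexp : Complex.exp (2 * Real.pi * Complex.I * m) = 1 :=
      Complex.exp_eq_one_iff.2 ⟨m, by ring⟩
    have h := mul_expSubOneDiv (2 * Real.pi * Complex.I * m)
    rw [hexp, sub_self] at h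
    exact (mul_eq_zero.1 h).resolve_left (by simp [Real.pi_ne_zero, hm])

lemma Module.End.exists_hasEigenvector_mem_ker_of_commute {K V : Type*} [Field K]
    [IsAlgClosed K] [AddCommGroup V] [Module K V] [FiniteDimensional K V] {f g : End K V}
    (hfg : Commute f g) (hg : LinearMap.ker g ≠ ⊥) : ∃ μ v, f.HasEigenvector μ v ∧ g v = 0 := by
  have : Nontrivial (LinearMap.ker g) := Submodule.nontrivial_iff_ne_bot.2 hg
  have hmaps : ∀ v ∈ LinearMap.ker g, f v ∈ LinearMap.ker g := fun v hv => by
    rw [LinearMap.mem_ker, ← Module.End.mul_apply, ← hfg.eq, Module.End.mul_apply,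
      LinearMap.mem_ker.1 hv, map_zero]
  obtain ⟨μ, hμ⟩ := Module.End.exists_eigenvalue (f.restrict hmaps)
  obtain ⟨⟨v, hv⟩, hvμ⟩ := hμ.exists_hasEigenvector
  refine ⟨μ, v, ⟨?_, ?_⟩, hv⟩
  · exact Module.End.mem_eigenspace_iff.2 (congrArg Subtype.val hvμ.apply_eq_smul)
  · simpa using hvμ.2

lemma Module.End.HasEigenvector.tsum_inv_factorial_succ_smul_pow_apply {E : Type*}
    [AddCommGroup E] [Module ℂ E] [TopologicalSpace E] [ContinuousSMul ℂ E] [T2Space E]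
    {f : End ℂ E} {μ : ℂ} {v : E} (hv : f.HasEigenvector μ v) :
    ∑' n : ℕ, ((n + 1)! : ℂ)⁻¹ • (f ^ n) v = expSubOneDiv μ • v := by
  rw [expSubOneDiv, ← (summable_expSubOneDiv μ).tsum_smul_const]
  exact tsum_congr fun n => by rw [hv.pow_apply, smul_smul, smul_eq_mul]

section FiniteDimensional

variable {E : Type*} [NormedAddCommGroup E] [NormedSpace ℂ E] [FiniteDimensional ℂ E]

lemma expSubOneDiv_toContinuousLinearMap_apply (f : End ℂ E) (v : E) :
    expSubOneDiv (LinearMap.toContinuousLinearMap f) v =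
      ∑' n : ℕ, ((n + 1)! : ℂ)⁻¹ • (f ^ n) v := by
  have := FiniteDimensional.complete ℂ E
  refine ((ContinuousLinearMap.apply ℂ E v).map_tsum (summable_expSubOneDiv _)).trans
    (tsum_congr fun n => ?_)
  rw [ContinuousLinearMap.apply_apply, smul_apply, ← ContinuousLinearMap.coe_coe,
    ContinuousLinearMap.toLinearMap_pow, LinearMap.coe_toContinuousLinearMap]

lemma bijective_tsum_inv_factorial_succ_smul_pow_apply_iff (f : End ℂ E) :
    Function.Bijective (fun v => ∑' n : ℕ, ((n + 1)! : ℂ)⁻¹ • (f ^ n) v) ↔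
      ∀ μ : ℂ, f.HasEigenvalue μ → expSubOneDiv μ ≠ 0 := by
  have := FiniteDimensional.complete ℂ E
  set Φ : E →L[ℂ] E := expSubOneDiv (LinearMap.toContinuousLinearMap f)
  have hΦ : (fun v => ∑' n : ℕ, ((n + 1)! : ℂ)⁻¹ • (f ^ n) v) = Φ :=
    funext fun v => (expSubOneDiv_toContinuousLinearMap_apply f v).symm
  have hcomm : Commute f Φ := by
    simpa using (commute_expSubOneDiv (LinearMap.toContinuousLinearMap f)).map
      ContinuousLinearMap.toLinearMapRingHom
  have hbij : Function.Bijective Φ ↔ Function.Injective Φ :=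
    ⟨And.left, fun h => ⟨h, (LinearMap.injective_iff_surjective (f := (Φ : End ℂ E))).1 h⟩⟩
  rw [hΦ, hbij]
  constructor
  · intro hinj μ hμ hzero
    obtain ⟨v, hv⟩ := hμ.exists_hasEigenvector
    refine hv.2 (hinj ?_)
    rw [map_zero, ← congrFun hΦ, hv.tsum_inv_factorial_succ_smul_pow_apply, hzero, zero_smul]
  · intro h
    by_contra hninj
    obtain ⟨μ, v, hv, hker⟩ := Module.End.exists_hasEigenvector_mem_ker_of_commute hcomm
      fun hbot => hninj (LinearMap.ker_eq_bot.1 hbot)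
    rw [ContinuousLinearMap.coe_coe, ← congrFun hΦ,
      hv.tsum_inv_factorial_succ_smul_pow_apply] at hker
    exact h μ (Module.End.hasEigenvalue_of_hasEigenvector hv)
      ((smul_eq_zero.1 hker).resolve_right hv.2)

end FiniteDimensional

lemma adPow_eq_adLin_pow_apply {d : ℕ} (S : Mat d) (n : ℕ) (M : Mat d) :
    adPow S n M = (adLin S ^ n) M := by
  induction n with
  | zero => rfl
  | succ n ih => rw [pow_succ', Module.End.mul_apply, ← ih]; rfl

lemma dexp_eq_tsum_adLin_pow_apply {d : ℕ} (S : Mat d) :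
    dexp S = fun M => ∑' n : ℕ, ((n + 1)! : ℂ)⁻¹ • (adLin S ^ n) M := by
  ext1 M
  simp_rw [dexp, adPow_eq_adLin_pow_apply]

-- The entrywise sup norm induces the product topology, in which `dexp` is summed.
attribute [local instance] Matrix.normedAddCommGroup Matrix.normedSpace

theorem stmt9_general (d : ℕ) (S : Mat d) :
    Function.Bijective (fun M : Mat d => dexp S M) ↔
      ∀ μ : ℂ, Module.End.HasEigenvalue (adLin S) μ →
        ∀ m : ℤ, m ≠ 0 → μ ≠ 2 * Real.pi * Complex.I * m := by
  rw [dexp_eq_tsum_adLin_pow_apply]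
  refine (bijective_tsum_inv_factorial_succ_smul_pow_apply_iff (adLin S)).trans ?_
  simp only [ne_eq, expSubOneDiv_eq_zero_iff, not_exists, not_and]

/-- Baker, invertibility criterion. The linear operator `dexp_Σ` is
invertible if and only if no eigenvalue of `ad_Σ` belongs to `{2πim : m ∈ ℤ, m ≠ 0}`. -/
theorem stmt9 (d : ℕ) (hd : 1 ≤ d) (S : Mat d) :
    Function.Bijective (fun M : Mat d => dexp S M) ↔
      ∀ μ : ℂ, Module.End.HasEigenvalue (adLin S) μ →
        ∀ m : ℤ, m ≠ 0 → μ ≠ 2 * Real.pi * Complex.I * m :=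
  stmt9_general d S
end
end

section
/- (Baker, inversion formula) Let d ≥ 1 and let Σ be a d×d complex matrix with spectral norm ‖Σ‖ < π. Then the operator dexp_Σ(M) = ∑_{n≥0} ad_Σ^n(M)/(n+1)! is invertible and its inverse is given by the convergent series dexp_Σ^{−1}(M) = ∑_{k≥0} (β_k/k!) ad_Σ^k(M) for all M ∈ M^{d×d}, where β_k are the Bernoulli numbers; that is, dexp_Σ( ∑_{k≥0} (β_k/k!) ad_Σ^k(M) ) = M and ∑_{k≥0} (β_k/k!) ad_Σ^k( dexp_Σ(M) ) = M for every M. -/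
noncomputable section

/-- The spectral norm: the operator norm of `M` acting on `ℂ^d` with the Euclidean norm. -/
def specNorm {d : ℕ} (M : Mat d) : ℝ :=
  ‖Matrix.toEuclideanCLM (𝕜 := ℂ) M‖

/-- `∑_{k≥0} (β_k/k!) ad_Σ^k(M)`, where `β_k` are the Bernoulli numbers (with `β₁ = −1/2`). -/
def dexpInv {d : ℕ} (S M : Mat d) : Mat d :=
  ∑' k : ℕ, ((bernoulli k : ℂ) / (k.factorial : ℂ)) • adPow S k M

/-!
With the L2 operator norm on `Mat d`, `dexp_Σ` and the Bernoulli series are `f(ad_Σ)` and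
`g(ad_Σ)` for the power series `f(z) = (e^z - 1)/z` and `g(z) = z/(e^z - 1)`, evaluated in the
Banach algebra of continuous linear endomorphisms of `Mat d`. Since `g f = 1` as formal power
series, the Cauchy product formula gives `g(T) f(T) = f(T) g(T) = 1` whenever both series
converge absolutely. For `f` this always holds; for `g` it holds when `‖T‖ < 2π`, because Euler's
evaluation of `ζ(2m)` bounds `|β_k| / k!` by `4 / (2π)^k`. Finally `‖ad_Σ‖ ≤ 2‖Σ‖ < 2π`.
-/

open PowerSeries in
lemma mk_bernoulli_div_factorial_mul_mk_inv_factorial_succ :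
    mk (fun k => (bernoulli k : ℂ) / k.factorial) * mk (fun n => ((n + 1).factorial : ℂ)⁻¹) =
      1 := by
  have hexp : exp ℂ - 1 = X * mk (fun n => ((n + 1).factorial : ℂ)⁻¹) := by
    ext (_ | n) <;> simp [coeff_succ_X_mul]
  have hB : bernoulliPowerSeries ℂ = mk (fun k => (bernoulli k : ℂ) / k.factorial) := by
    ext k; simp [bernoulliPowerSeries]
  have h := bernoulliPowerSeries_mul_exp_sub_one ℂ
  rw [hexp, hB, mul_left_comm] at h
  exact mul_left_cancel₀ X_ne_zero (h.trans (mul_one X).symm)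

open Real Filter Finset

lemma tsum_one_div_nat_pow_le_two {k : ℕ} (hk : 2 ≤ k) : ∑' n : ℕ, 1 / (n : ℝ) ^ k ≤ 2 :=
  calc ∑' n : ℕ, 1 / (n : ℝ) ^ k
      ≤ ∑' n : ℕ, 1 / (n : ℝ) ^ 2 := by
        refine Summable.tsum_le_tsum (fun n => ?_) (Real.summable_one_div_nat_pow.2 (by omega))
          (Real.summable_one_div_nat_pow.2 one_lt_two)
        rcases n.eq_zero_or_pos with rfl | hn
        · simp [zero_pow (by omega : k ≠ 0)]
        · exact one_div_le_one_div_of_le (by positivity)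
            (pow_le_pow_right₀ (by exact_mod_cast hn) hk)
    _ = π ^ 2 / 6 := hasSum_zeta_two.tsum_eq
    _ ≤ 2 := by nlinarith [pi_lt_d2, pi_pos]

lemma abs_bernoulli_div_factorial_le {k : ℕ} (hk : 2 ≤ k) :
    |(bernoulli k : ℝ)| / k.factorial ≤ 4 / (2 * π) ^ k := by
  rcases k.even_or_odd with ⟨m, rfl⟩ | hodd
  -- Euler: `ζ(2m) = (-1)^(m+1) 2^(2m-1) π^(2m) β_(2m) / (2m)!`, and `ζ(2m) ≤ ζ(2) < 2`.
  · have hm : m ≠ 0 := by omega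
    rw [← two_mul] at *
    have hζ := (hasSum_zeta_nat hm).tsum_eq
    have hpow : (2 * π) ^ (2 * m) = 2 * (2 ^ (2 * m - 1) * π ^ (2 * m)) := by
      rw [mul_pow, ← mul_assoc, ← pow_succ', Nat.sub_add_cancel (by omega)]
    have hζ_abs : 2 ^ (2 * m - 1) * π ^ (2 * m) * (|(bernoulli (2 * m) : ℝ)| / (2 * m).factorial)
        ≤ 2 := by
      calc _ = |∑' n : ℕ, 1 / (n : ℝ) ^ (2 * m)| := by
            rw [hζ, abs_div, abs_mul, abs_mul, abs_mul, abs_pow, abs_neg, abs_one, one_pow,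
              one_mul, abs_of_pos (by positivity : (0 : ℝ) < 2 ^ (2 * m - 1)),
              abs_of_pos (by positivity : 0 < π ^ (2 * m)), Nat.abs_cast]
            ring
        _ ≤ 2 := by
            rw [abs_of_nonneg (tsum_nonneg fun n => by positivity)]
            exact tsum_one_div_nat_pow_le_two (by omega)
    rw [hpow, le_div_iff₀ (by positivity)]
    nlinarith
  · rw [bernoulli_eq_zero_of_odd hodd (by omega)]
    simp only [Rat.cast_zero, abs_zero, zero_div]
    positivity

lemma summable_norm_bernoulli_div_factorial_mul_pow {r : ℝ} (hr₀ : 0 ≤ r) (hr : r < 2 * π) :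
    Summable fun k : ℕ => ‖(bernoulli k : ℂ) / k.factorial‖ * r ^ k := by
  have hq : r / (2 * π) < 1 := (div_lt_one (by positivity)).2 hr
  refine ((summable_geometric_of_lt_one (by positivity) hq).mul_left 4)
    |>.of_norm_bounded_eventually_nat ?_
  filter_upwards [eventually_ge_atTop 2] with k hk
  rw [norm_div, Complex.norm_ratCast, Complex.norm_natCast, norm_mul, norm_pow,
    Real.norm_of_nonneg hr₀, Real.norm_of_nonneg (by positivity), div_pow, ← mul_div_assoc,
    mul_div_right_comm 4]
  exact mul_le_mul_of_nonneg_right (abs_bernoulli_div_factorial_le hk) (by positivity)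

section PowerSeriesInBanachAlgebra

variable {𝕜 B : Type*} [NormedField 𝕜] [NormedRing B] [NormedAlgebra 𝕜 B]

lemma summable_norm_smul_pow {c : ℕ → 𝕜} {T : B} {r : ℝ} (hTr : ‖T‖ ≤ r)
    (hc : Summable fun k => ‖c k‖ * r ^ k) : Summable fun k => ‖c k • T ^ k‖ := by
  refine hc.of_norm_bounded_eventually_nat ?_
  filter_upwards [eventually_gt_atTop 0] with k hk
  rw [norm_norm]
  calc ‖c k • T ^ k‖ ≤ ‖c k‖ * ‖T ^ k‖ := norm_smul_le _ _
    _ ≤ ‖c k‖ * r ^ k := by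
      gcongr
      exact (norm_pow_le' T hk).trans (pow_le_pow_left₀ (norm_nonneg T) hTr k)

lemma tsum_smul_pow_mul_tsum_smul_pow [CompleteSpace B] {a b : ℕ → 𝕜} {T : B}
    (ha : Summable fun k => ‖a k • T ^ k‖) (hb : Summable fun k => ‖b k • T ^ k‖) :
    (∑' k, a k • T ^ k) * (∑' k, b k • T ^ k) =
      ∑' n, PowerSeries.coeff n (PowerSeries.mk a * PowerSeries.mk b) • T ^ n := by
  rw [tsum_mul_tsum_eq_tsum_sum_antidiagonal_of_summable_norm ha hb]
  refine tsum_congr fun n => ?_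
  rw [PowerSeries.coeff_mul, sum_smul]
  refine sum_congr rfl fun p hp => ?_
  rw [smul_mul_smul_comm, ← pow_add, mem_antidiagonal.1 hp, PowerSeries.coeff_mk,
    PowerSeries.coeff_mk]

lemma tsum_smul_pow_mul_tsum_smul_pow_eq_one [CompleteSpace B] {a b : ℕ → 𝕜} {T : B}
    (ha : Summable fun k => ‖a k • T ^ k‖) (hb : Summable fun k => ‖b k • T ^ k‖)
    (hab : PowerSeries.mk a * PowerSeries.mk b = 1) :
    (∑' k, a k • T ^ k) * (∑' k, b k • T ^ k) = 1 := by
  rw [tsum_smul_pow_mul_tsum_smul_pow ha hb, hab]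
  simp [PowerSeries.coeff_one, ite_smul]

end PowerSeriesInBanachAlgebra

section Ad

variable (𝕜 : Type*) {A : Type*} [NontriviallyNormedField 𝕜] [NormedRing A] [NormedAlgebra 𝕜 A]

def adL (x : A) : A →L[𝕜] A :=
  ContinuousLinearMap.mul 𝕜 A x - (ContinuousLinearMap.mul 𝕜 A).flip x

variable {𝕜}

lemma adL_apply (x a : A) : adL 𝕜 x a = x * a - a * x := rfl

lemma norm_adL_le (x : A) : ‖adL 𝕜 x‖ ≤ 2 * ‖x‖ := by
  refine ContinuousLinearMap.opNorm_le_bound _ (by positivity) fun a => ?_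
  calc ‖x * a - a * x‖ ≤ ‖x‖ * ‖a‖ + ‖a‖ * ‖x‖ :=
        (norm_sub_le _ _).trans (add_le_add (norm_mul_le _ _) (norm_mul_le _ _))
    _ = 2 * ‖x‖ * ‖a‖ := by ring

end Ad

section BernoulliSeries

variable {B : Type*} [NormedRing B] [NormedAlgebra ℂ B]

lemma summable_norm_inv_factorial_succ_smul_pow (T : B) :
    Summable fun n : ℕ => ‖((n + 1).factorial : ℂ)⁻¹ • T ^ n‖ := by
  refine summable_norm_smul_pow le_rfl <|
    (Real.summable_pow_div_factorial ‖T‖).of_nonneg_of_le (fun n => by positivity) fun n => ?_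
  rw [norm_inv, Complex.norm_natCast, inv_mul_eq_div]
  gcongr
  exact n.le_succ

lemma summable_norm_bernoulli_div_factorial_smul_pow {T : B} (hT : ‖T‖ < 2 * π) :
    Summable fun k : ℕ => ‖((bernoulli k : ℂ) / k.factorial) • T ^ k‖ :=
  summable_norm_smul_pow le_rfl (summable_norm_bernoulli_div_factorial_mul_pow (norm_nonneg T) hT)

lemma tsum_bernoulli_smul_pow_mul_tsum_inv_factorial_succ_smul_pow [CompleteSpace B] {T : B}
    (hT : ‖T‖ < 2 * π) :
    (∑' k : ℕ, ((bernoulli k : ℂ) / k.factorial) • T ^ k) *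
      (∑' n : ℕ, ((n + 1).factorial : ℂ)⁻¹ • T ^ n) = 1 :=
  tsum_smul_pow_mul_tsum_smul_pow_eq_one (summable_norm_bernoulli_div_factorial_smul_pow hT)
    (summable_norm_inv_factorial_succ_smul_pow T)
    mk_bernoulli_div_factorial_mul_mk_inv_factorial_succ

lemma tsum_inv_factorial_succ_smul_pow_mul_tsum_bernoulli_smul_pow [CompleteSpace B] {T : B}
    (hT : ‖T‖ < 2 * π) :
    (∑' n : ℕ, ((n + 1).factorial : ℂ)⁻¹ • T ^ n) *
      (∑' k : ℕ, ((bernoulli k : ℂ) / k.factorial) • T ^ k) = 1 :=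
  tsum_smul_pow_mul_tsum_smul_pow_eq_one (summable_norm_inv_factorial_succ_smul_pow T)
    (summable_norm_bernoulli_div_factorial_smul_pow hT)
    (by rw [mul_comm, mk_bernoulli_div_factorial_mul_mk_inv_factorial_succ])

end BernoulliSeries

-- The L2 operator norm on matrices induces their usual (product) topology, so `Summable` and `∑'`
-- in `dexp`, `dexpInv` and the theorem keep their meaning.
open scoped Matrix.Norms.L2Operator

lemma adPow_eq_adL_pow_apply {d : ℕ} (S M : Mat d) (n : ℕ) : adPow S n M = (adL ℂ S ^ n) M := by
  induction n with
  | zero => rfl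
  | succ n ih => rw [adPow, ih, pow_succ', mul_apply_eq_comp, adL_apply]

lemma hasSum_smul_adPow {d : ℕ} {c : ℕ → ℂ} (S M : Mat d)
    (hc : Summable fun n => ‖c n • adL ℂ S ^ n‖) :
    HasSum (fun n => c n • adPow S n M) ((∑' n, c n • adL ℂ S ^ n) M) := by
  simp only [adPow_eq_adL_pow_apply]
  exact hc.of_norm.hasSum.mapL (ContinuousLinearMap.apply ℂ (Mat d) M)

theorem stmt10_general (d : ℕ) (S : Mat d) (hS : specNorm S < Real.pi) :
    ∀ M : Mat d,
      Summable (fun k : ℕ => ((bernoulli k : ℂ) / (k.factorial : ℂ)) • adPow S k M) ∧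
      dexp S (dexpInv S M) = M ∧
      dexpInv S (dexp S M) = M := by
  intro M
  have hS' : ‖S‖ < π := hS
  have hT : ‖adL ℂ S‖ < 2 * π := (norm_adL_le S).trans_lt (by linarith)
  have hdexp (N : Mat d) := hasSum_smul_adPow S N (summable_norm_inv_factorial_succ_smul_pow _)
  have hdexpInv (N : Mat d) :=
    hasSum_smul_adPow S N (summable_norm_bernoulli_div_factorial_smul_pow hT)
  refine ⟨(hdexpInv M).summable, ?_, ?_⟩
  · rw [dexp, (hdexp _).tsum_eq, dexpInv, (hdexpInv M).tsum_eq, ← mul_apply_eq_comp,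
      tsum_inv_factorial_succ_smul_pow_mul_tsum_bernoulli_smul_pow hT, one_apply_eq_self]
  · rw [dexpInv, (hdexpInv _).tsum_eq, dexp, (hdexp M).tsum_eq, ← mul_apply_eq_comp,
      tsum_bernoulli_smul_pow_mul_tsum_inv_factorial_succ_smul_pow hT, one_apply_eq_self]

/-- Baker, inversion formula. If `‖Σ‖ < π` in spectral norm, then the
series `∑_{k≥0} (β_k/k!) ad_Σ^k(M)` converges and is a two-sided inverse of `dexp_Σ`. -/
theorem stmt10 (d : ℕ) (hd : 1 ≤ d) (S : Mat d) (hS : specNorm S < Real.pi) :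
    ∀ M : Mat d,
      Summable (fun k : ℕ => ((bernoulli k : ℂ) / (k.factorial : ℂ)) • adPow S k M) ∧
      dexp S (dexpInv S M) = M ∧
      dexpInv S (dexp S M) = M :=
  stmt10_general d S hS
end
end
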